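/- Let n = 2m with m odd, q = 2^m, x ∈ F_{2^n} \ {0, 1}, and set h = x + x^q, c = x + x^2, r = x^{q+1}, A = c^{2-2q}(h + c + c^2), B = c + c^2, D = A(A^{q+1} + B^{q+1}), H = A^2(A^q B^3 + A B^{3q} + B^{2+2q}). Assume h ≠ 0. Then H/D^2 = u + u^2, where u = (h^2(r + r^2) + r + r^4 + h r^2)/h^5; in particular Tr^m_1(H/D^2) = 0. -/

import Mathlib

/-!
Put `y = x ^ q`. As `𝔽_{2^n}` has `q ^ 2` elements, `a ↦ a ^ q` is a field involution swapping `x`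
and `y`, so `A ^ q` and `B ^ q` are `A` and `B` with `x` and `y` exchanged. In characteristic two this
gives the polynomial identities `A ^ (q + 1) + B ^ (q + 1) = h ^ 5` and
`A ^ q B ^ 3 + A B ^ (3q) + B ^ (2 + 2q) = h ^ 5 N + N ^ 2`, where `u = N / h ^ 5`, whence
`H / D ^ 2 = u + u ^ 2` as soon as `A ≠ 0`. Up to units `A` is `y + x ^ 4`, and `x ^ q = x ^ 4` would
make `x` a fixed point of `a ↦ a ^ 16` and of `a ↦ a ^ (q ^ 2)`, hence (`m` being odd) of `a ↦ a ^ 4`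
and so of `a ↦ a ^ q`, contradicting `h ≠ 0`. Finally `u` is symmetric in `x, y`, so `u ^ q = u`, and
the trace of `u + u ^ 2` telescopes to `u + u ^ q = 0`.
-/

open Finset Function

theorem Function.IsPeriodicPt.iterate_eq_self_of_iterate_eq_iterate_two {α : Type*}
    {f : α → α} {x : α} {m : ℕ} (hx : IsPeriodicPt f (2 * m) x) (hodd : Odd m)
    (h : f^[m] x = f^[2] x) : f^[m] x = x := by
  have h4 : IsPeriodicPt f 4 x :=
    calc f^[4] x = f^[2] (f^[2] x) := iterate_add_apply f 2 2 x
      _ = f^[2] (f^[m] x) := by rw [h]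
      _ = f^[m] (f^[2] x) := by rw [← iterate_add_apply, ← iterate_add_apply, add_comm]
      _ = f^[m] (f^[m] x) := by rw [h]
      _ = x := by rw [← iterate_add_apply, ← two_mul]; exact hx
  have h2 : IsPeriodicPt f 2 x := by
    simpa [show Nat.gcd 4 (2 * m) = 2 by
      rw [show 4 = 2 * 2 by rfl, Nat.gcd_mul_left, Nat.coprime_two_left.mpr hodd]] using h4.gcd hx
  rw [h, h2.eq]

theorem pow_two_pow_ne_pow_four {M : Type*} [Monoid M] {x : M} {m : ℕ} (hodd : Odd m)
    (hx : x ^ 2 ^ (2 * m) = x) (hne : x ^ 2 ^ m ≠ x) : x ^ 2 ^ m ≠ x ^ 4 := by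
  have hper : IsPeriodicPt (fun y : M => y ^ 2) (2 * m) x := by
    rwa [IsPeriodicPt, IsFixedPt, pow_iterate]
  intro h4
  exact hne (by simpa only [pow_iterate] using
    hper.iterate_eq_self_of_iterate_eq_iterate_two hodd (by simpa only [pow_iterate]))

theorem GaloisField.pow_card {p n : ℕ} [Fact p.Prime] (hn : n ≠ 0) (a : GaloisField p n) :
    a ^ p ^ n = a := by
  have := Fintype.ofFinite (GaloisField p n)
  rw [← GaloisField.card p n hn, Nat.card_eq_fintype_card]
  exact FiniteField.pow_card a

theorem GaloisField.iterateFrobenius_involutive {p m : ℕ} [Fact p.Prime] (hm : m ≠ 0) :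
    Involutive (iterateFrobenius (GaloisField p (2 * m)) p m) := fun a => by
  simp only [iterateFrobenius_def]
  rw [← pow_mul, ← pow_add, ← two_mul, GaloisField.pow_card (by omega)]

theorem CharTwo.sum_range_add_sq_pow_two_pow {R : Type*} [CommRing R] [CharP R 2] (u : R) (m : ℕ) :
    ∑ i ∈ range m, (u + u ^ 2) ^ 2 ^ i = u + u ^ 2 ^ m := by
  induction m with
  | zero => simp [CharTwo.add_self_eq_zero]
  | succ m ih =>
    rw [sum_range_succ, ih, add_pow_char_pow, ← pow_mul, ← pow_succ']
    linear_combination u ^ 2 ^ m * CharTwo.two_eq_zero (R := R)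

theorem CharTwo.add_sq_ne_zero_of_add_map_ne_zero {K : Type*} [Field K] [CharP K 2] {x : K}
    (σ : K →+* K) (h : x + σ x ≠ 0) : x + x ^ 2 ≠ 0 := by
  intro hx
  rcases mul_eq_zero.mp (show x * (1 + x) = 0 by linear_combination hx) with h0 | h1
  · simp [h0] at h
  · rw [← CharTwo.add_eq_zero.mp h1] at h
    simp [CharTwo.add_self_eq_zero] at h

namespace TraceZero

variable {K : Type*} [Field K]

-- `y` stands for `x ^ q`; `A x y`, `B x` and `N x y / (x + y) ^ 5` are the paper's `A`, `B`, `u`.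
def A (x y : K) : K :=
  (x + x ^ 2) ^ 2 / (y + y ^ 2) ^ 2 * (x + y + (x + x ^ 2) + (x + x ^ 2) ^ 2)

def B (x : K) : K := x + x ^ 2 + (x + x ^ 2) ^ 2

def N (x y : K) : K :=
  (x + y) ^ 2 * (y * x + (y * x) ^ 2) + y * x + (y * x) ^ 4 + (x + y) * (y * x) ^ 2

theorem map_A (σ : K →+* K) (x y : K) : σ (A x y) = A (σ x) (σ y) := by simp [A]

theorem map_B (σ : K →+* K) (x : K) : σ (B x) = B (σ x) := by simp [B]

theorem map_N (σ : K →+* K) (x y : K) : σ (N x y) = N (σ x) (σ y) := by simp [N]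

theorem N_comm (x y : K) : N y x = N x y := by unfold N; ring

variable [CharP K 2]

theorem A_eq (x y : K) : A x y = (x + x ^ 2) ^ 2 / (y + y ^ 2) ^ 2 * (y + x ^ 4) := by
  unfold A; congr 1; grind

theorem B_eq (x : K) : B x = (x + x ^ 2) * (1 + x + x ^ 2) := by unfold B; grind

theorem A_ne_zero {x y : K} (hx : x + x ^ 2 ≠ 0) (hy : y + y ^ 2 ≠ 0) (h4 : y ≠ x ^ 4) :
    A x y ≠ 0 := by
  rw [A_eq]
  exact mul_ne_zero (div_ne_zero (pow_ne_zero _ hx) (pow_ne_zero _ hy))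
    (CharTwo.add_eq_zero.not.mpr h4)

theorem A_mul_A {x y : K} (hx : x + x ^ 2 ≠ 0) (hy : y + y ^ 2 ≠ 0) :
    A y x * A x y = (x + y ^ 4) * (y + x ^ 4) := by
  rw [A_eq, A_eq, mul_mul_mul_comm, div_mul_div_comm, mul_comm ((y + y ^ 2) ^ 2),
    div_self (mul_ne_zero (pow_ne_zero 2 hx) (pow_ne_zero 2 hy)), one_mul]

theorem A_mul_A_add_B_mul_B {x y : K} (hx : x + x ^ 2 ≠ 0) (hy : y + y ^ 2 ≠ 0) :
    A y x * A x y + B y * B x = (x + y) ^ 5 := by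
  rw [A_mul_A hx hy, B_eq, B_eq]
  grind

theorem A_mul_B_cube_add (x y : K) :
    A y x * B x ^ 3 + A x y * B y ^ 3 + B x ^ 2 * B y ^ 2 = (x + y) ^ 5 * N x y + N x y ^ 2 := by
  rw [A_eq, A_eq, B_eq, B_eq]
  unfold N
  field_simp
  grind

theorem H_div_D_sq_eq {x y : K} (hxy : x + y ≠ 0) (hA : A x y ≠ 0) :
    A x y ^ 2 * (A y x * B x ^ 3 + A x y * B y ^ 3 + B x ^ 2 * B y ^ 2) /
        (A x y * (A y x * A x y + B y * B x)) ^ 2 =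
      N x y / (x + y) ^ 5 + (N x y / (x + y) ^ 5) ^ 2 := by
  have hx : x + x ^ 2 ≠ 0 := fun hx => hA (by simp [A, hx])
  have hy : y + y ^ 2 ≠ 0 := fun hy => hA (by simp [A, hy])
  rw [A_mul_A_add_B_mul_B hx hy, A_mul_B_cube_add]
  field_simp

end TraceZero

open TraceZero

theorem stmt_17_general (m : ℕ) (hodd : Odd m)
    (x : GaloisField 2 (2 * m)) :
    let q := 2 ^ m
    let h := x + x ^ q
    let c := x + x ^ 2
    let r := x ^ (q + 1)
    let A := c ^ 2 / c ^ (2 * q) * (h + c + c ^ 2)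
    let B := c + c ^ 2
    let D := A * (A ^ (q + 1) + B ^ (q + 1))
    let H := A ^ 2 * (A ^ q * B ^ 3 + A * B ^ (3 * q) + B ^ (2 + 2 * q))
    let u := (h ^ 2 * (r + r ^ 2) + r + r ^ 4 + h * r ^ 2) / h ^ 5
    h ≠ 0 →
      H / D ^ 2 = u + u ^ 2 ∧
        ∑ i ∈ Finset.range m, (H / D ^ 2) ^ (2 ^ i) = 0 := by
  intro q h c r A B D H u hh
  have hm : m ≠ 0 := hodd.pos.ne'
  let σ := iterateFrobenius (GaloisField 2 (2 * m)) 2 m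
  have hσ (a) : a ^ q = σ a := (iterateFrobenius_def 2 m a).symm
  have hσσ : Involutive σ := GaloisField.iterateFrobenius_involutive hm
  have hxσ : x + σ x ≠ 0 := by rwa [← hσ]
  have hσx : σ x ≠ x ^ 4 := by
    rw [← hσ]
    refine pow_two_pow_ne_pow_four hodd (GaloisField.pow_card (by omega) x) fun hq => hxσ ?_
    rw [← hσ, (hq : x ^ q = x), CharTwo.add_self_eq_zero]
  have hA : A = TraceZero.A x (σ x) := by simp only [A, c, h, pow_mul', hσ, map_add, map_pow]; rfl
  have hu : u = N x (σ x) / (x + σ x) ^ 5 := by simp only [u, h, r, pow_succ x q, hσ]; rfl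
  have key : H / D ^ 2 = u + u ^ 2 := by
    have hD : D = A * (σ A * A + σ B * B) := by simp only [D, pow_succ, hσ]
    have hH : H = A ^ 2 * (σ A * B ^ 3 + A * σ B ^ 3 + B ^ 2 * σ B ^ 2) := by
      simp only [H, pow_mul', pow_add, hσ]
    rw [hD, hH, hu, hA, show B = TraceZero.B x from rfl, map_A, map_B, hσσ]
    refine H_div_D_sq_eq hxσ (A_ne_zero (CharTwo.add_sq_ne_zero_of_add_map_ne_zero σ hxσ) ?_ hσx)
    exact CharTwo.add_sq_ne_zero_of_add_map_ne_zero σ (by rwa [hσσ, add_comm])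
  refine ⟨key, ?_⟩
  rw [key, CharTwo.sum_range_add_sq_pow_two_pow, hσ u, hu, map_div₀, map_pow, map_add, map_N, hσσ,
    add_comm (σ x), N_comm, CharTwo.add_self_eq_zero]

theorem stmt_17 (m : ℕ) (hm : 0 < m) (hodd : Odd m)
    (x : GaloisField 2 (2 * m)) (hx0 : x ≠ 0) (hx1 : x ≠ 1) :
    let q := 2 ^ m
    let h := x + x ^ q
    let c := x + x ^ 2
    let r := x ^ (q + 1)
    let A := c ^ 2 / c ^ (2 * q) * (h + c + c ^ 2)
    let B := c + c ^ 2
    let D := A * (A ^ (q + 1) + B ^ (q + 1))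
    let H := A ^ 2 * (A ^ q * B ^ 3 + A * B ^ (3 * q) + B ^ (2 + 2 * q))
    let u := (h ^ 2 * (r + r ^ 2) + r + r ^ 4 + h * r ^ 2) / h ^ 5
    h ≠ 0 →
      H / D ^ 2 = u + u ^ 2 ∧
        ∑ i ∈ Finset.range m, (H / D ^ 2) ^ (2 ^ i) = 0 :=
  stmt_17_general m hodd x
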